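/- arXiv:1809.06313 — 2 statements merged into one kernel-verified Lean document; each statement's English description precedes it below -/
import Mathlib

section
/- Let k be a field, let F = FreeAlgebra k (Fin 2) be the free associative k-algebra on two generators x and y, and let A = F / I where I is the two-sided ideal of F generated by {x², y², x*y, y*x}. Then A is representation-infinite: there exists an infinite family of A-modules, each finite-dimensional over k and indecomposable, that are pairwise non-isomorphic. -/
/-- The quotient of a ring by a ring congruence (e.g. by a two-sided ideal) of a
`k`-algebra is again a `k`-algebra. -/
noncomputable instance ringConQuotientAlgebra {k R : Type*} [CommSemiring k] [Semiring R]
    [Algebra k R] (c : RingCon R) : Algebra k c.Quotient where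
  algebraMap := (RingCon.mk' c).comp (algebraMap k R)
  commutes' r x := by
    obtain ⟨a⟩ := x
    show ((algebraMap k R r : R) : c.Quotient) * (a : c.Quotient)
        = (a : c.Quotient) * ((algebraMap k R r : R) : c.Quotient)
    rw [← RingCon.coe_mul, ← RingCon.coe_mul, Algebra.commutes]
  smul_def' r x := by
    obtain ⟨a⟩ := x
    show r • (a : c.Quotient) = ((algebraMap k R r : R) : c.Quotient) * (a : c.Quotient)
    rw [← RingCon.coe_smul, ← RingCon.coe_mul, Algebra.smul_def]

/-- The two-sided ideal of the free algebra `k⟨x,y⟩` generated by `x², y², xy, yx`. -/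
noncomputable def gentleLocalIdeal (k : Type u) [Field k] :
    TwoSidedIdeal (FreeAlgebra k (Fin 2)) :=
  TwoSidedIdeal.span
    {FreeAlgebra.ι k (0 : Fin 2) * FreeAlgebra.ι k (0 : Fin 2),
     FreeAlgebra.ι k (1 : Fin 2) * FreeAlgebra.ι k (1 : Fin 2),
     FreeAlgebra.ι k (0 : Fin 2) * FreeAlgebra.ι k (1 : Fin 2),
     FreeAlgebra.ι k (1 : Fin 2) * FreeAlgebra.ι k (0 : Fin 2)}

/-- The algebra `A = k⟨x,y⟩/(x², y², xy, yx)`. -/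
abbrev GentleLocalAlgebra (k : Type u) [Field k] : Type u :=
  (gentleLocalIdeal k).ringCon.Quotient

/-- A module is *indecomposable* if it is nonzero and is not the internal direct sum of
two nonzero submodules. -/
def IndecomposableModule (R : Type*) [Ring R] (M : Type*) [AddCommGroup M] [Module R M] :
    Prop :=
  Nontrivial M ∧
    ∀ M₁ M₂ : Submodule R M, M₁ ⊓ M₂ = ⊥ → M₁ ⊔ M₂ = ⊤ → M₁ = ⊥ ∨ M₂ = ⊥

/-!
The modules are `V × V` with `V = k^(n+1)`, where `x` acts by `(u, v) ↦ (0, u)` and `y` by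
`(u, v) ↦ (0, J u)` for the nilpotent shift `J`; their dimensions `2(n+1)` are pairwise distinct.
An idempotent endomorphism `φ` commutes with both actions, so its top-left block `a` is an
idempotent commuting with `J`, and `a = 0` already forces `φ = φ² = 0`. Because `J` is nilpotent
with a one-dimensional kernel, every nonzero `J`-stable subspace contains `ker J`; so the
complementary `J`-stable subspaces `range a` and `ker a` cannot both be nonzero, and `a` (hence
`φ`) is `0` or `1`.
-/

open LinearMap

theorem Submodule.eq_bot_of_disjoint_ker_of_isNilpotent {R M : Type*} [Semiring R]
    [AddCommMonoid M] [Module R M] {J : Module.End R M} (hJ : IsNilpotent J)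
    {W : Submodule R M} (hW : ∀ w ∈ W, J w ∈ W) (hdisj : Disjoint W (ker J)) : W = ⊥ := by
  have eq_zero_of_pow : ∀ t, ∀ w ∈ W, (J ^ t) w = 0 → w = 0 := by
    intro t
    induction t with
    | zero => intro w _ h; simpa using h
    | succ t ih =>
      intro w hw h
      rw [pow_succ, Module.End.mul_apply] at h
      exact Submodule.disjoint_def.mp hdisj w hw (ih (J w) (hW w hw) h)
  obtain ⟨N, hN⟩ := hJ
  exact (Submodule.eq_bot_iff W).mpr fun w hw => eq_zero_of_pow N w hw (by simp [hN])

theorem Module.End.eq_zero_or_eq_one_of_isIdempotentElem_of_commute {R M : Type*} [Ring R]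
    [AddCommGroup M] [Module R M] {J a : Module.End R M} (hJ : IsNilpotent J)
    (hker : IsAtom (ker J)) (ha : IsIdempotentElem a) (hc : Commute a J) : a = 0 ∨ a = 1 := by
  have ker_le {W : Submodule R M} (hW : ∀ w ∈ W, J w ∈ W) (hne : W ≠ ⊥) : ker J ≤ W :=
    hker.not_disjoint_iff_le.mp fun h =>
      hne (W.eq_bot_of_disjoint_ker_of_isNilpotent hJ hW h.symm)
  have range_stable : ∀ w ∈ range a, J w ∈ range a := by
    rintro _ ⟨x, rfl⟩
    exact ⟨J x, by rw [← Module.End.mul_apply, hc.eq, Module.End.mul_apply]⟩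
  have ker_stable : ∀ w ∈ ker a, J w ∈ ker a := by
    intro w hw
    rw [mem_ker] at hw ⊢
    rw [← Module.End.mul_apply, hc.eq, Module.End.mul_apply, hw, map_zero]
  by_cases h0 : range a = ⊥
  · exact Or.inl (range_eq_bot.mp h0)
  by_cases h1 : ker a = ⊥
  · refine Or.inr (LinearMap.ext fun x => ?_)
    have hx : a x - x ∈ ker a := by
      rw [mem_ker, map_sub, ← Module.End.mul_apply, ha.eq, sub_self]
    rwa [h1, Submodule.mem_bot, sub_eq_zero] at hx
  have hker_bot : ker J ≤ ⊥ :=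
    ha.isCompl.inf_eq_bot ▸ le_inf (ker_le range_stable h0) (ker_le ker_stable h1)
  exact absurd (le_bot_iff.mp hker_bot) hker.1

theorem indecomposableModule_of_isIdempotentElem {R M : Type*} [Ring R] [AddCommGroup M]
    [Module R M] [Nontrivial M]
    (h : ∀ e : Module.End R M, IsIdempotentElem e → e = 0 ∨ e = 1) :
    IndecomposableModule R M := by
  refine ⟨inferInstance, fun M₁ M₂ hinf hsup => ?_⟩
  have hc : IsCompl M₁ M₂ := ⟨disjoint_iff.mpr hinf, codisjoint_iff.mpr hsup⟩
  rcases h _ (M₁.isIdempotentElem_projection hc) with h0 | h1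
  · left; rw [← M₁.range_projection hc, h0, range_zero]
  · right; rw [← M₁.ker_projection hc, h1, Module.End.one_eq_id, ker_id]

namespace Module.End

variable {R V : Type*} [Ring R] [AddCommGroup V] [Module R V]

def lowerLeft (f : Module.End R V) : Module.End R (V × V) :=
  inr R V V ∘ₗ f ∘ₗ fst R V V

def topLeft (φ : Module.End R (V × V)) : Module.End R V :=
  fst R V V ∘ₗ φ ∘ₗ inl R V V

@[simp]
theorem lowerLeft_apply (f : Module.End R V) (w : V × V) : lowerLeft f w = (0, f w.1) := rfl

@[simp]
theorem topLeft_apply (φ : Module.End R (V × V)) (u : V) : topLeft φ u = (φ (u, 0)).1 := rfl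

theorem lowerLeft_mul_lowerLeft (f g : Module.End R V) : lowerLeft f * lowerLeft g = 0 :=
  LinearMap.ext fun w => by simp

theorem topLeft_one_sub (φ : Module.End R (V × V)) : topLeft (1 - φ) = 1 - topLeft φ :=
  LinearMap.ext fun u => by simp

variable {φ : Module.End R (V × V)}

theorem apply_zero_prod_of_commute (hx : Commute φ (lowerLeft 1)) (v : V) :
    φ (0, v) = (0, topLeft φ v) := by
  simpa using congr($(hx.eq) (v, 0))

theorem fst_apply_of_commute (hx : Commute φ (lowerLeft 1)) (w : V × V) :
    (φ w).1 = topLeft φ w.1 := by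
  have hw : w = (w.1, 0) + (0, w.2) := by simp
  rw [hw, map_add, Prod.fst_add, apply_zero_prod_of_commute hx]
  simp

theorem commute_topLeft (hx : Commute φ (lowerLeft 1)) {J : Module.End R V}
    (hy : Commute φ (lowerLeft J)) : Commute (topLeft φ) J := by
  ext u
  simpa [apply_zero_prod_of_commute hx] using congr(($(hy.eq) (u, 0)).2)

theorem isIdempotentElem_topLeft (hx : Commute φ (lowerLeft 1)) (hφ : IsIdempotentElem φ) :
    IsIdempotentElem (topLeft φ) := by
  ext u
  have h := congr(($(hφ.eq) (u, 0)).1)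
  rwa [Module.End.mul_apply, fst_apply_of_commute hx] at h

theorem eq_zero_of_topLeft_eq_zero (hx : Commute φ (lowerLeft 1)) (hφ : IsIdempotentElem φ)
    (h : topLeft φ = 0) : φ = 0 := by
  refine LinearMap.ext fun w => ?_
  have hw : φ w = (0, (φ w).2) := by
    ext
    · rw [fst_apply_of_commute hx, h, LinearMap.zero_apply]
    · rfl
  calc φ w = φ (φ w) := congr($(hφ.eq) w).symm
    _ = 0 := by rw [hw, apply_zero_prod_of_commute hx, h, LinearMap.zero_apply, Prod.mk_zero_zero]

theorem eq_zero_or_eq_one_of_commute_lowerLeft {J : Module.End R V}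
    (hJ : ∀ a : Module.End R V, IsIdempotentElem a → Commute a J → a = 0 ∨ a = 1)
    (hφ : IsIdempotentElem φ) (hx : Commute φ (lowerLeft 1))
    (hy : Commute φ (lowerLeft J)) : φ = 0 ∨ φ = 1 := by
  rcases hJ _ (isIdempotentElem_topLeft hx hφ) (commute_topLeft hx hy) with h | h
  · exact Or.inl (eq_zero_of_topLeft_eq_zero hx hφ h)
  · refine Or.inr (sub_eq_zero.mp ?_).symm
    refine eq_zero_of_topLeft_eq_zero ((Commute.one_left _).sub_left hx) hφ.one_sub ?_
    rw [topLeft_one_sub, h, sub_self]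

end Module.End

open Module.End

section FinShift

variable {R : Type*} [Semiring R] {n : ℕ}

def finShift (R : Type*) [Semiring R] (n : ℕ) : Module.End R (Fin (n + 1) → R) :=
  LinearMap.pi (Fin.cases 0 fun i => LinearMap.proj i.castSucc)

@[simp]
theorem finShift_apply_zero (u : Fin (n + 1) → R) : finShift R n u 0 = 0 := rfl

@[simp]
theorem finShift_apply_succ (u : Fin (n + 1) → R) (i : Fin n) :
    finShift R n u i.succ = u i.castSucc := rfl

theorem finShift_pow_apply_of_lt (t : ℕ) (u : Fin (n + 1) → R) (i : Fin (n + 1))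
    (hi : (i : ℕ) < t) : (finShift R n ^ t) u i = 0 := by
  induction t generalizing i with
  | zero => omega
  | succ t ih =>
    rw [pow_succ', Module.End.mul_apply]
    cases i using Fin.cases with
    | zero => exact finShift_apply_zero _
    | succ i =>
      rw [finShift_apply_succ]
      exact ih i.castSucc (by simp at hi ⊢; omega)

theorem isNilpotent_finShift : IsNilpotent (finShift R n) :=
  ⟨n + 1, LinearMap.ext fun u => funext fun i => finShift_pow_apply_of_lt _ u i i.isLt⟩

theorem ker_finShift : ker (finShift R n) = Submodule.span R {Pi.single (Fin.last n) 1} := by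
  apply le_antisymm
  · intro u hu
    refine Submodule.mem_span_singleton.mpr ⟨u (Fin.last n), funext fun i => ?_⟩
    cases i using Fin.lastCases with
    | last => simp
    | cast i =>
      have hi := congr_fun (mem_ker.mp hu) i.succ
      rw [finShift_apply_succ] at hi
      simp [hi, Fin.castSucc_ne_last]
  · rw [Submodule.span_le, Set.singleton_subset_iff, SetLike.mem_coe, mem_ker]
    funext i
    cases i using Fin.cases with
    | zero => exact finShift_apply_zero _
    | succ i => simp [Fin.castSucc_ne_last]

theorem isAtom_ker_finShift {k : Type*} [DivisionRing k] : IsAtom (ker (finShift k n)) := by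
  rw [ker_finShift]
  exact nonzero_span_atom _ (by simp)

end FinShift

section GentleModule

variable {k V : Type*} [Field k] [AddCommGroup V] [Module k V]

noncomputable def gentleRep (J : Module.End k V) :
    GentleLocalAlgebra k →ₐ[k] Module.End k (V × V) :=
  (gentleLocalIdeal k).ringCon.liftₐ (FreeAlgebra.lift k ![lowerLeft 1, lowerLeft J]) <| by
    change _ ≤ (TwoSidedIdeal.ker _).ringCon
    rw [← TwoSidedIdeal.ringCon_le_iff, gentleLocalIdeal, TwoSidedIdeal.span_le]
    simp [Set.insert_subset_iff, TwoSidedIdeal.mem_ker, lowerLeft_mul_lowerLeft]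

theorem gentleRep_ι (J : Module.End k V) (i : Fin 2) :
    gentleRep J ((FreeAlgebra.ι k i : FreeAlgebra k (Fin 2)) : GentleLocalAlgebra k) =
      ![lowerLeft 1, lowerLeft J] i :=
  FreeAlgebra.lift_ι_apply _ _

/-- A type synonym for `V × V`, so that its `GentleLocalAlgebra k`-module structure can depend
on `J`. -/
def GentleModule (_J : Module.End k V) : Type _ := V × V

namespace GentleModule

variable (J : Module.End k V)

instance : AddCommGroup (GentleModule J) := inferInstanceAs (AddCommGroup (V × V))

instance : Module k (GentleModule J) := inferInstanceAs (Module k (V × V))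

noncomputable instance : Module (GentleLocalAlgebra k) (GentleModule J) :=
  Module.compHom (V × V) (gentleRep J).toRingHom

instance : IsScalarTower k (GentleLocalAlgebra k) (GentleModule J) :=
  ⟨fun r a w => show gentleRep J (r • a) w = r • gentleRep J a w by rw [map_smul]; rfl⟩

instance [Nontrivial V] : Nontrivial (GentleModule J) := inferInstanceAs (Nontrivial (V × V))

instance [FiniteDimensional k V] : FiniteDimensional k (GentleModule J) :=
  inferInstanceAs (FiniteDimensional k (V × V))

theorem finrank_eq [FiniteDimensional k V] :
    Module.finrank k (GentleModule J) = 2 * Module.finrank k V :=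
  (Module.finrank_prod (R := k) (M := V) (M' := V)).trans (two_mul _).symm

theorem commute_gentleRep (φ : GentleModule J →ₗ[GentleLocalAlgebra k] GentleModule J)
    (a : GentleLocalAlgebra k) :
    Commute (φ.restrictScalars k : Module.End k (V × V)) (gentleRep J a) :=
  LinearMap.ext fun w => φ.map_smul a w

theorem indecomposableModule [Nontrivial V]
    (hJ : ∀ a : Module.End k V, IsIdempotentElem a → Commute a J → a = 0 ∨ a = 1) :
    IndecomposableModule (GentleLocalAlgebra k) (GentleModule J) := by
  refine indecomposableModule_of_isIdempotentElem fun φ hφ => ?_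
  have hx := commute_gentleRep J φ (FreeAlgebra.ι k 0 : FreeAlgebra k (Fin 2))
  have hy := commute_gentleRep J φ (FreeAlgebra.ι k 1 : FreeAlgebra k (Fin 2))
  rw [gentleRep_ι] at hx hy
  have hφk : IsIdempotentElem (φ.restrictScalars k : Module.End k (V × V)) :=
    congr(LinearMap.restrictScalars k $(hφ.eq))
  exact (eq_zero_or_eq_one_of_commute_lowerLeft hJ hφk hx hy).imp
    (fun h => LinearMap.restrictScalars_injective k h)
    (fun h => LinearMap.restrictScalars_injective k h)

end GentleModule

end GentleModule

theorem RestrictScalars.finite_of_isScalarTower {R S M : Type*} [CommSemiring R] [Semiring S]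
    [Algebra R S] [AddCommMonoid M] [Module R M] [Module S M] [IsScalarTower R S M]
    [Module.Finite R M] : Module.Finite R (RestrictScalars R S M) :=
  Module.Finite.equiv <| (RestrictScalars.addEquiv R S M).symm.toLinearEquiv fun r x => by
    rw [← algebraMap_smul S r x]
    exact RestrictScalars.addEquiv_symm_map_algebraMap_smul R S M r x

/-- The algebra `A = k⟨x,y⟩/(x², y², xy, yx)` is representation-infinite: it admits an
infinite family of pairwise non-isomorphic finite-dimensional indecomposable modules. -/
theorem gentleLocalAlgebra_representation_infinite (k : Type u) [Field k] :
    ∃ M : ℕ → ModuleCat.{u} (GentleLocalAlgebra k),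
      (∀ n, @FiniteDimensional k (RestrictScalars k (GentleLocalAlgebra k) (M n)) _ _
          (RestrictScalars.module k (GentleLocalAlgebra k) (M n)) ∧
        IndecomposableModule (GentleLocalAlgebra k) (M n)) ∧
      ∀ m n : ℕ, m ≠ n → IsEmpty ((M m) ≃ₗ[GentleLocalAlgebra k] (M n)) := by
  refine ⟨fun n => ModuleCat.of _ (GentleModule (finShift k n)), fun n => ⟨?_, ?_⟩,
    fun m n hmn => ⟨fun e => hmn ?_⟩⟩
  · exact RestrictScalars.finite_of_isScalarTower (M := GentleModule (finShift k n))
  · exact GentleModule.indecomposableModule _ fun a ha hc =>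
      eq_zero_or_eq_one_of_isIdempotentElem_of_commute isNilpotent_finShift isAtom_ker_finShift
        ha hc
  · have h := (e.restrictScalars k :
      GentleModule (finShift k m) ≃ₗ[k] GentleModule (finShift k n)).finrank_eq
    rw [GentleModule.finrank_eq, GentleModule.finrank_eq, Module.finrank_fin_fun,
      Module.finrank_fin_fun] at h
    omega
end

section
/- Let k be a field, let m ≥ 1, and let σ : ZMod (m+1) → Bool be any orientation. Let Q be the quiver of type Ã_m determined by σ: its vertex set is ZMod (m+1), and for each i ∈ ZMod (m+1) there is exactly one arrow between i and i+1, directed from i to i+1 if σ(i) = true and from i+1 to i otherwise. Then the category of representations of Q over k (equivalently, the category of functors from the path category of Q to the category of k-vector spaces) contains an infinite family of pairwise non-isomorphic objects F such that F assigns a finite-dimensional k-vector space to every vertex and the endomorphism ring of F in the functor category is a division ring. -/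
open CategoryTheory

/-- The vertex set of the quiver of type `Ã_m` associated to an orientation
`σ : ZMod (m+1) → Bool`: a cycle with `m+1` vertices. -/
def AtildeVertex (m : ℕ) (σ : ZMod (m + 1) → Bool) : Type := ZMod (m + 1)

/-- The quiver of type `Ã_m` determined by the orientation `σ`: for each vertex `i`
there is exactly one arrow between `i` and `i + 1`, directed from `i` to `i + 1` if
`σ i = true`, and from `i + 1` to `i` otherwise. -/
instance AtildeQuiver (m : ℕ) (σ : ZMod (m + 1) → Bool) : Quiver (AtildeVertex m σ) :=
  ⟨fun a b => {i : ZMod (m + 1) //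
    if σ i = true then ((a : ZMod (m + 1)) = i ∧ (b : ZMod (m + 1)) = i + 1)
    else ((a : ZMod (m + 1)) = i + 1 ∧ (b : ZMod (m + 1)) = i)}⟩

section Aux

open Polynomial

universe u

lemma infinite_monic_irred (k : Type u) [Field k] :
    {p : k[X] | Irreducible p ∧ p.Monic}.Infinite := by
  intro hfin
  classical
  set t := hfin.toFinset with ht
  have hmonP : (∏ p ∈ t, p).Monic :=
    monic_prod_of_monic _ _ fun p hp => (hfin.mem_toFinset.mp hp).2
  set M : k[X] := X * ∏ p ∈ t, p with hM
  have hmonM : M.Monic := monic_X.mul hmonP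
  have hdegM : 1 ≤ M.natDegree := by
    rw [hM, natDegree_mul X_ne_zero hmonP.ne_zero, natDegree_X]
    omega
  set q : k[X] := M + 1 with hq
  have hdq : q.degree = M.degree := by
    apply degree_add_eq_left_of_degree_lt
    rw [degree_one, degree_eq_natDegree hmonM.ne_zero]
    exact_mod_cast hdegM
  have hdq' : 0 < q.degree := by
    rw [hdq, degree_eq_natDegree hmonM.ne_zero]
    exact_mod_cast hdegM
  have hq0 : q ≠ 0 := fun h => by simp [h] at hdq'
  have hqu : ¬ IsUnit q := fun h => by
    have h2 := degree_eq_zero_of_isUnit h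
    rw [h2] at hdq'; exact lt_irrefl _ hdq'
  obtain ⟨r, hr_irr, hr_dvd⟩ := WfDvdMonoid.exists_irreducible_factor hqu hq0
  set r' := normalize r with hr'
  have hr'_mon : r'.Monic := monic_normalize hr_irr.ne_zero
  have hr'_irr : Irreducible r' := (normalize_associated r).symm.irreducible hr_irr
  have hr'_dvd : r' ∣ q := (normalize_associated r).dvd.trans hr_dvd
  have hr'_mem : r' ∈ t := hfin.mem_toFinset.mpr ⟨hr'_irr, hr'_mon⟩
  have hdvdM : r' ∣ M := Dvd.dvd.mul_left (Finset.dvd_prod_of_mem _ hr'_mem) X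
  have hone : r' ∣ 1 := by
    have := dvd_sub hr'_dvd hdvdM
    rw [hq] at this
    simpa using this
  exact hr'_irr.not_isUnit (isUnit_of_dvd_one hone)

variable {k : Type u} [Field k] {m : ℕ} (σ : ZMod (m + 1) → Bool)

noncomputable def atildePre (p : k[X]) : Prefunctor (AtildeVertex m σ) (ModuleCat.{u} k) where
  obj _ := ModuleCat.of k (AdjoinRoot p)
  map {a b} e :=
    if (e.1 : ZMod (m + 1)) = 0 then
      ModuleCat.ofHom (LinearMap.mulLeft k (AdjoinRoot.root p))
    else ModuleCat.ofHom LinearMap.id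

noncomputable abbrev atildeF (p : k[X]) : Paths (AtildeVertex m σ) ⥤ ModuleCat.{u} k :=
  Paths.lift (atildePre σ p)

noncomputable def appl {p q : k[X]} (η : atildeF σ p ⟶ atildeF σ q) (i : ZMod (m + 1)) :
    AdjoinRoot p →ₗ[k] AdjoinRoot q :=
  (η.app i).hom

-- arrows
def arrT (i : ZMod (m + 1)) (h : σ i = true) :
    @Quiver.Hom (AtildeVertex m σ) _ (show AtildeVertex m σ from i) (show AtildeVertex m σ from i + 1) :=
  ⟨i, by simp [h]; rfl⟩

def arrF (i : ZMod (m + 1)) (h : σ i = false) :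
    @Quiver.Hom (AtildeVertex m σ) _ (show AtildeVertex m σ from i + 1) (show AtildeVertex m σ from i) :=
  ⟨i, by simp [h]; rfl⟩

lemma appl_step {p q : k[X]} (η : atildeF σ p ⟶ atildeF σ q) {i : ZMod (m + 1)} (hi : i ≠ 0) :
    appl σ η i = appl σ η (i + 1) := by
  cases hσ : σ i with
  | true =>
    have h := η.naturality (Quiver.Hom.toPath (arrT σ i hσ))
    rw [Paths.lift_toPath, Paths.lift_toPath] at h
    dsimp [atildePre] at h
    rw [show ((arrT σ i hσ).1 : ZMod (m + 1)) = i from rfl] at h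
    simp only [if_neg hi] at h
    exact LinearMap.ext fun x => (DFunLike.congr_fun (congrArg ModuleCat.Hom.hom h) x).symm
  | false =>
    have h := η.naturality (Quiver.Hom.toPath (arrF σ i hσ))
    rw [Paths.lift_toPath, Paths.lift_toPath] at h
    dsimp [atildePre] at h
    rw [show ((arrF σ i hσ).1 : ZMod (m + 1)) = i from rfl] at h
    simp only [if_neg hi] at h
    exact LinearMap.ext fun x => DFunLike.congr_fun (congrArg ModuleCat.Hom.hom h) x

lemma appl_all_eq {p q : k[X]} (η : atildeF σ p ⟶ atildeF σ q) (j : ZMod (m + 1)) :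
    appl σ η j = appl σ η 1 := by
  have key : ∀ r : ℕ, r ≤ m → appl σ η ((1 + r : ℕ) : ZMod (m + 1)) = appl σ η 1 := by
    intro r
    induction r with
    | zero => intro _; norm_num
    | succ s ih =>
      intro hs
      have hne : ((1 + s : ℕ) : ZMod (m + 1)) ≠ 0 := by
        rw [Ne, ZMod.natCast_eq_zero_iff]
        intro hdvd
        have := Nat.le_of_dvd (by omega) hdvd
        omega
      have hstep := appl_step σ η hne
      have hcast : ((1 + (s + 1) : ℕ) : ZMod (m + 1)) = ((1 + s : ℕ) : ZMod (m + 1)) + 1 := by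
        push_cast; ring
      rw [hcast, ← hstep, ih (by omega)]
  have hval : (j - 1).val ≤ m := by
    have := ZMod.val_lt (j - 1)
    omega
  have hj : ((1 + (j - 1).val : ℕ) : ZMod (m + 1)) = j := by
    push_cast [ZMod.natCast_val, ZMod.cast_id]
    ring
  rw [← hj]
  exact key _ hval

lemma appl_comm {p q : k[X]} (η : atildeF σ p ⟶ atildeF σ q) :
    (appl σ η 1).comp (LinearMap.mulLeft k (AdjoinRoot.root p)) =
      (LinearMap.mulLeft k (AdjoinRoot.root q)).comp (appl σ η 1) := by
  cases hσ : σ 0 with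
  | true =>
    have h := η.naturality (Quiver.Hom.toPath (arrT σ 0 hσ))
    rw [Paths.lift_toPath, Paths.lift_toPath] at h
    dsimp [atildePre] at h
    rw [show ((arrT σ 0 hσ).1 : ZMod (m + 1)) = 0 from rfl] at h
    simp only [if_pos rfl] at h
    have e0 : appl σ η 0 = appl σ η 1 := (appl_all_eq σ η 0).trans (appl_all_eq σ η 1).symm
    have e1 : appl σ η (0 + 1) = appl σ η 1 :=
      (appl_all_eq σ η (0 + 1)).trans (appl_all_eq σ η 1).symm
    refine LinearMap.ext fun x => ?_
    have hx : appl σ η (0 + 1) (AdjoinRoot.root p * x) = AdjoinRoot.root q * appl σ η 0 x :=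
      DFunLike.congr_fun (congrArg ModuleCat.Hom.hom h) x
    rw [e0, e1] at hx
    simpa using hx
  | false =>
    have h := η.naturality (Quiver.Hom.toPath (arrF σ 0 hσ))
    rw [Paths.lift_toPath, Paths.lift_toPath] at h
    dsimp [atildePre] at h
    rw [show ((arrF σ 0 hσ).1 : ZMod (m + 1)) = 0 from rfl] at h
    simp only [if_pos rfl] at h
    have e0 : appl σ η 0 = appl σ η 1 := (appl_all_eq σ η 0).trans (appl_all_eq σ η 1).symm
    have e1 : appl σ η (0 + 1) = appl σ η 1 :=
      (appl_all_eq σ η (0 + 1)).trans (appl_all_eq σ η 1).symm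
    refine LinearMap.ext fun x => ?_
    have hx : appl σ η 0 (AdjoinRoot.root p * x) = AdjoinRoot.root q * appl σ η (0 + 1) x :=
      DFunLike.congr_fun (congrArg ModuleCat.Hom.hom h) x
    rw [e0, e1] at hx
    simpa using hx

lemma comm_mk {p q : k[X]} (c : AdjoinRoot p →ₗ[k] AdjoinRoot q)
    (hc : ∀ x, c (AdjoinRoot.root p * x) = AdjoinRoot.root q * c x) :
    ∀ (f : k[X]) (x), c (AdjoinRoot.mk p f * x) = AdjoinRoot.mk q f * c x := by
  intro f
  induction f using Polynomial.induction_on with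
  | C a =>
    intro x
    have h1 : AdjoinRoot.mk p (C a) * x = a • x := by
      rw [Algebra.smul_def, AdjoinRoot.algebraMap_eq]; rfl
    have h2 : AdjoinRoot.mk q (C a) * c x = a • c x := by
      rw [Algebra.smul_def, AdjoinRoot.algebraMap_eq]; rfl
    rw [h1, h2, map_smul]
  | add f g hf hg =>
    intro x
    simp only [map_add, add_mul, map_add, hf, hg]
  | monomial n a ih =>
    intro x
    have h1 : AdjoinRoot.mk p (C a * X ^ (n + 1)) =
        AdjoinRoot.mk p (C a * X ^ n) * AdjoinRoot.root p := by
      rw [← AdjoinRoot.mk_X, ← map_mul]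
      ring_nf
    have h2 : AdjoinRoot.mk q (C a * X ^ (n + 1)) =
        AdjoinRoot.mk q (C a * X ^ n) * AdjoinRoot.root q := by
      rw [← AdjoinRoot.mk_X, ← map_mul]
      ring_nf
    rw [h1, h2, mul_assoc, ih, mul_assoc, ← hc, ← ih]

lemma endo_isUnit {p : k[X]} (hp : Irreducible p) (η : End (atildeF σ p)) (hη : η ≠ 0) :
    IsUnit η := by
  haveI : Fact (Irreducible p) := ⟨hp⟩
  set c := appl σ (η : atildeF σ p ⟶ atildeF σ p) 1 with hcdef
  have hc : ∀ x, c (AdjoinRoot.root p * x) = AdjoinRoot.root p * c x := fun x => by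
    have := DFunLike.congr_fun (appl_comm σ (η : atildeF σ p ⟶ atildeF σ p)) x
    simpa using this
  have hform : ∀ y, c y = y * c 1 := by
    intro y
    induction y using AdjoinRoot.induction_on with
    | ih f => rw [← mul_one ((AdjoinRoot.mk p) f), comm_mk c hc f 1, mul_one]
  have hu : c 1 ≠ 0 := by
    intro h0
    apply hη
    apply NatTrans.ext
    funext v
    have h1 : (η.app v).hom = appl σ (η : atildeF σ p ⟶ atildeF σ p) v := rfl
    rw [CategoryTheory.NatTrans.app_zero]
    apply ModuleCat.hom_ext
    rw [h1]
    refine (appl_all_eq σ η v).trans ?_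
    rw [← hcdef]
    exact LinearMap.ext fun x => by rw [hform, h0, mul_zero]; rfl
  set u := c 1 with hudef
  set d := LinearMap.mulLeft k u⁻¹ with hddef
  have hcd : c ∘ₗ d = LinearMap.id := LinearMap.ext fun x => by
    simp only [hddef, LinearMap.comp_apply, LinearMap.mulLeft_apply, LinearMap.id_apply, hform]
    rw [mul_comm u⁻¹ x, mul_assoc, inv_mul_cancel₀ hu, mul_one]
  have hdc : d ∘ₗ c = LinearMap.id := LinearMap.ext fun x => by
    simp only [hddef, LinearMap.comp_apply, LinearMap.mulLeft_apply, LinearMap.id_apply, hform]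
    rw [mul_comm u⁻¹ _, mul_assoc, mul_inv_cancel₀ hu, mul_one]
  set e : AdjoinRoot p ≃ₗ[k] AdjoinRoot p := LinearEquiv.ofLinear c d hcd hdc with hedef
  haveI : ∀ v, IsIso (η.app v) := by
    intro v
    have h1 : η.app v = e.toModuleIso.hom := by
      exact ModuleCat.hom_ext (appl_all_eq σ (η : atildeF σ p ⟶ atildeF σ p) v)
    rw [h1]
    exact Iso.isIso_hom _
  haveI : IsIso η := NatIso.isIso_of_isIso_app η
  exact (isUnit_iff_isIso η).mpr inferInstance

lemma end_nontrivial {p : k[X]} (hp : Irreducible p) : Nontrivial (End (atildeF σ p)) := by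
  haveI : Fact (Irreducible p) := ⟨hp⟩
  refine ⟨1, 0, fun h => ?_⟩
  have e : appl σ (1 : End (atildeF σ p)) 0 = appl σ (0 : End (atildeF σ p)) 0 := by rw [h]
  have h1 : appl σ (1 : End (atildeF σ p)) 0 (1 : AdjoinRoot p) = 1 := rfl
  have h0 : appl σ (0 : End (atildeF σ p)) 0 (1 : AdjoinRoot p) = 0 := by
    show ((0 : atildeF σ p ⟶ atildeF σ p).app ((0 : ZMod (m + 1)) : Paths (AtildeVertex m σ))).hom
      (1 : AdjoinRoot p) = 0
    refine (congrArg (fun f => ModuleCat.Hom.hom f (1 : AdjoinRoot p))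
      (CategoryTheory.NatTrans.app_zero (F := atildeF σ p) (G := atildeF σ p) _)).trans ?_
    rfl
  exact one_ne_zero ((h1.symm.trans (by rw [e])).trans h0)

lemma atilde_noniso {p q : k[X]} (hp : Irreducible p) (hq : Irreducible q)
    (hpm : p.Monic) (hqm : q.Monic) (hne : p ≠ q) :
    IsEmpty (atildeF (m := m) σ p ≅ atildeF σ q) := by
  constructor
  intro e
  set g := appl σ e.hom 1 with hg
  have hcomm : ∀ x, g (AdjoinRoot.root p * x) = AdjoinRoot.root q * g x := fun x => by
    have := DFunLike.congr_fun (appl_comm σ e.hom) x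
    simpa using this
  set g' := appl σ e.inv 1 with hg'
  have hgg' : ∀ x, g (g' x) = x := by
    intro x
    have h2 : appl σ (e.inv ≫ e.hom) 1 = appl σ (𝟙 (atildeF σ q)) 1 := by rw [e.inv_hom_id]
    exact DFunLike.congr_fun h2 x
  have hchief : AdjoinRoot.mk q p * g (g' 1) = 0 := by
    have h3 := comm_mk g hcomm p (g' 1)
    rw [AdjoinRoot.mk_self] at h3
    simpa using h3.symm
  rw [hgg' 1, mul_one] at hchief
  have hdvd : q ∣ p := AdjoinRoot.mk_eq_zero.mp hchief
  exact hne (eq_of_monic_of_associated hpm hqm (hq.associated_of_dvd hp hdvd).symm)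


end Aux

open Polynomial in
/-- For any orientation `σ` of the quiver `Q` of type `Ã_m` (with `m ≥ 1`) and any field
`k`, the category of representations of `Q` over `k` — functors from the path category
of `Q` to `k`-vector spaces — contains an infinite family of pairwise non-isomorphic
objects which are pointwise finite-dimensional and whose endomorphism rings are division
rings (i.e. bricks). -/
theorem atilde_has_infinitely_many_bricks (k : Type u) [Field k] (m : ℕ) (hm : 1 ≤ m)
    (σ : ZMod (m + 1) → Bool) :
    ∃ F : ℕ → (Paths (AtildeVertex m σ) ⥤ ModuleCat.{u} k),
      (∀ n, (∀ v : Paths (AtildeVertex m σ), FiniteDimensional k ((F n).obj v)) ∧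
        Nontrivial (End (F n)) ∧ ∀ f : End (F n), f ≠ 0 → IsUnit f) ∧
      ∀ a b : ℕ, a ≠ b → IsEmpty (F a ≅ F b) := by
  classical
  have e : ℕ ↪ {p : k[X] | Irreducible p ∧ p.Monic} :=
    Set.Infinite.natEmbedding _ (infinite_monic_irred k)
  set P : ℕ → k[X] := fun n => (e n : k[X]) with hP
  have hirr : ∀ n, Irreducible (P n) := fun n => (e n).2.1
  have hmon : ∀ n, (P n).Monic := fun n => (e n).2.2
  refine ⟨fun n => atildeF σ (P n), fun n =>
    ⟨?_, end_nontrivial σ (hirr n), fun f hf => endo_isUnit σ (hirr n) f hf⟩, ?_⟩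
  · intro v
    have : FiniteDimensional k (AdjoinRoot (P n)) :=
      Module.Finite.of_basis (AdjoinRoot.powerBasis (hirr n).ne_zero).basis
    exact this
  · intro a b hab
    exact atilde_noniso σ (hirr a) (hirr b) (hmon a) (hmon b)
      (fun h => hab (e.injective (Subtype.ext h)))
end
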